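/- Let X, Y be metric spaces and f : X → Y a continuous open surjection, with X complete. Then for every subset S ⊆ Y there exists Z ⊆ X with dens(Z) ≤ dens(Y) and S ⊆ f(Z). -/

import Mathlib

/-!
Fix a dense set `D ⊆ Y` of minimal cardinality `κ`; if `κ` is finite, `Y` is finite and a
section of `f` over `Y` does the job. Otherwise, since `f` is open, the images of the balls of
radius `2⁻¹ ^ (n + 1)` centred in any set `A ⊆ X` form an open cover of `f '' A`, which has a
subcover of at most `κ` members (`Y` has a base of `κ` balls centred in `D`). Closing a starting
set under these choices gives `E ⊆ X` with `#E ≤ κ` along which every `y ∈ Y` can be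
approximated: a sequence in `E` whose `n`-th term is within `2⁻¹ ^ n` of the fibre over `y`
and of the next term. By completeness it converges to a point of `closure E` over `y`, and the
density character of `closure E` is at most `#E`.
-/

noncomputable def densityCharacter (X : Type*) [TopologicalSpace X] : Cardinal :=
  sInf {c | ∃ s : Set X, Dense s ∧ Cardinal.mk s = c}

open Metric Set Filter Topology Function
open Cardinal hiding univ

universe u

section DensityCharacter

variable {X : Type*} [TopologicalSpace X]

lemma densityCharacter_le_mk {s : Set X} (hs : Dense s) : densityCharacter X ≤ #s :=
  csInf_le' ⟨s, hs, rfl⟩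

lemma densityCharacter_le_mk_self : densityCharacter X ≤ #X :=
  (densityCharacter_le_mk dense_univ).trans_eq mk_univ

variable (X) in
lemma exists_dense_mk_eq_densityCharacter : ∃ s : Set X, Dense s ∧ #s = densityCharacter X :=
  csInf_mem (s := {c | ∃ s : Set X, Dense s ∧ #s = c}) ⟨_, univ, dense_univ, rfl⟩

lemma densityCharacter_closure_le (s : Set X) : densityCharacter (closure s) ≤ #s := by
  have hdense : Dense ((↑) ⁻¹' s : Set (closure s)) := by
    rw [Subtype.dense_iff, Subtype.image_preimage_coe, inter_eq_right.2 subset_closure]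
  exact (densityCharacter_le_mk hdense).trans (mk_preimage_of_injective _ _ Subtype.val_injective)

end DensityCharacter

lemma mk_iUnion_nat_le {α : Type u} {κ : Cardinal.{u}} (hκ : ℵ₀ ≤ κ) {s : ℕ → Set α}
    (hs : ∀ n, #(s n) ≤ κ) : #(⋃ n, s n) ≤ κ := by
  simpa using (mk_iUnion_le_lift s).trans <|
    mul_le_of_le hκ (by simpa using hκ) (ciSup_le' fun n => by simpa using hs n)

lemma exists_superset_mk_le_of_closed {α : Type u} {κ : Cardinal.{u}} (hκ : ℵ₀ ≤ κ)
    {A : Set α} (hA : #A ≤ κ) (g : α → ℕ → Set α) (hg : ∀ a n, #(g a n) ≤ κ) :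
    ∃ E : Set α, A ⊆ E ∧ #E ≤ κ ∧ ∀ a ∈ E, ∀ n, g a n ⊆ E := by
  let step : Set α → Set α := fun B => B ∪ ⋃ a ∈ B, ⋃ n, g a n
  have hstep : ∀ B : Set α, #B ≤ κ → #(step B) ≤ κ := fun B hB =>
    (mk_union_le _ _).trans <| add_le_of_le hκ hB <| (mk_biUnion_le _ _).trans <|
      mul_le_of_le hκ hB <| ciSup_le' fun a => mk_iUnion_nat_le hκ (hg a)
  refine ⟨⋃ k, step^[k] A, subset_iUnion (step^[·] A) 0,
    mk_iUnion_nat_le hκ fun k => ?_, ?_⟩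
  · induction k with
    | zero => exact hA
    | succ k ih => exact iterate_succ_apply' step k A ▸ hstep _ ih
  · intro a ha n x hx
    obtain ⟨k, hk⟩ := mem_iUnion.1 ha
    refine mem_iUnion.2 ⟨k + 1, ?_⟩
    rw [iterate_succ_apply']
    exact Or.inr (mem_biUnion hk (mem_iUnion.2 ⟨n, hx⟩))

lemma exists_seq_of_forall_exists_succ {α : Type*} {P : ℕ → α → Prop}
    {R : ℕ → α → α → Prop} (h₀ : ∃ a, P 0 a)
    (hsucc : ∀ n a, P n a → ∃ b, P (n + 1) b ∧ R n a b) :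
    ∃ u : ℕ → α, ∀ n, P n (u n) ∧ R n (u n) (u (n + 1)) := by
  choose g hg using hsucc
  let v : ∀ n, {a // P n a} := fun n =>
    Nat.rec ⟨h₀.choose, h₀.choose_spec⟩ (fun n a => ⟨g n a a.2, (hg n a a.2).1⟩) n
  exact ⟨fun n => (v n).1, fun n => ⟨(v n).2, (hg n _ (v n).2).2⟩⟩

lemma Dense.exists_ball_subset_of_isOpen {Y : Type*} [PseudoMetricSpace Y] {D U : Set Y}
    (hD : Dense D) (hU : IsOpen U) {y : Y} (hy : y ∈ U) :
    ∃ d ∈ D, ∃ n : ℕ, y ∈ ball d (1 / (n + 1)) ∧ ball d (1 / (n + 1)) ⊆ U := by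
  obtain ⟨ε, hε, hball⟩ := Metric.isOpen_iff.1 hU y hy
  obtain ⟨n, hn⟩ := exists_nat_one_div_lt (half_pos hε)
  obtain ⟨d, hdy, hdD⟩ := Metric.dense_iff.1 hD y (1 / (n + 1)) Nat.one_div_pos_of_nat
  refine ⟨d, hdD, n, mem_ball_comm.1 hdy, (ball_subset_ball' ?_).trans hball⟩
  rw [mem_ball] at hdy
  linarith

lemma Dense.exists_subcover_mk_le {Y ι : Type u} [PseudoMetricSpace Y] {D : Set Y}
    (hD : Dense D) {U : ι → Set Y} (hU : ∀ i, IsOpen (U i)) {T : Set Y}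
    (hT : T ⊆ ⋃ i, U i) :
    ∃ I : Set ι, #I ≤ #D * ℵ₀ ∧ T ⊆ ⋃ i ∈ I, U i := by
  let A : Set (D × ℕ) := {p | ∃ i, ball (p.1 : Y) (1 / (p.2 + 1)) ⊆ U i}
  choose c hc using fun p : A => p.2
  refine ⟨range c, ?_, fun y hy => ?_⟩
  · calc #(range c) ≤ #A := mk_range_le
      _ ≤ #(D × ℕ) := mk_set_le _
      _ = #D * ℵ₀ := by simp
  · obtain ⟨i, hi⟩ := mem_iUnion.1 (hT hy)
    obtain ⟨d, hd, n, hyd, hdU⟩ := hD.exists_ball_subset_of_isOpen (hU i) hi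
    let p : A := ⟨(⟨d, hd⟩, n), i, hdU⟩
    exact mem_biUnion (mem_range_self p) (hc p hyd)

lemma IsOpenMap.exists_subset_image_subset_biUnion_image_ball {X Y : Type u}
    [PseudoMetricSpace X] [PseudoMetricSpace Y] {f : X → Y} (ho : IsOpenMap f) {D : Set Y}
    (hD : Dense D) (A : Set X) {r : ℝ} (hr : 0 < r) :
    ∃ W ⊆ A, #W ≤ #D * ℵ₀ ∧ f '' A ⊆ ⋃ b ∈ W, f '' ball b r := by
  obtain ⟨I, hI, hcover⟩ := hD.exists_subcover_mk_le (U := fun a : A => f '' ball (a : X) r)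
    (fun _ => ho _ isOpen_ball) (T := f '' A) <| by
      rintro _ ⟨a, ha, rfl⟩
      exact mem_iUnion.2 ⟨⟨a, ha⟩, mem_image_of_mem f (mem_ball_self hr)⟩
  exact ⟨(↑) '' I, Subtype.coe_image_subset _ _, mk_image_le.trans hI, by rwa [biUnion_image]⟩

lemma exists_tendsto_apply_eq_of_mem_image_ball {X Y : Type*} [PseudoMetricSpace X]
    [CompleteSpace X] [TopologicalSpace Y] [T2Space Y] {f : X → Y} (hf : Continuous f)
    {u : ℕ → X} (hu : CauchySeq u) {r : ℕ → ℝ} (hr : Tendsto r atTop (𝓝 0)) {y : Y}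
    (hy : ∀ n, y ∈ f '' ball (u n) (r n)) : ∃ x, Tendsto u atTop (𝓝 x) ∧ f x = y := by
  obtain ⟨x, hx⟩ := cauchySeq_tendsto_of_complete hu
  choose w hw hfw using hy
  have hwx : Tendsto w atTop (𝓝 x) :=
    hx.congr_dist (squeeze_zero (fun _ => dist_nonneg) (fun n => (mem_ball'.1 (hw n)).le) hr)
  have hfwx : Tendsto (fun _ : ℕ => y) atTop (𝓝 (f x)) := by
    simpa only [comp_def, hfw] using (hf.tendsto x).comp hwx
  exact ⟨x, hx, tendsto_nhds_unique hfwx tendsto_const_nhds⟩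

lemma IsOpenMap.exists_mk_le_image_closure_eq_univ {X Y : Type u} [MetricSpace X]
    [CompleteSpace X] [MetricSpace Y] {f : X → Y} (hf : Continuous f) (ho : IsOpenMap f)
    (hs : Surjective f) {D : Set Y} (hD : Dense D) (hκ : ℵ₀ ≤ #D) :
    ∃ E : Set X, #E ≤ #D ∧ f '' closure E = univ := by
  have hκ' : #D * ℵ₀ = #D := mul_aleph0_eq hκ
  obtain ⟨W₀, -, hW₀, hcover₀⟩ :=
    ho.exists_subset_image_subset_biUnion_image_ball hD univ one_pos
  have hW : ∀ (a : X) (n : ℕ), ∃ W ⊆ ball a (2⁻¹ ^ n), #W ≤ #D * ℵ₀ ∧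
      f '' ball a (2⁻¹ ^ n) ⊆ ⋃ b ∈ W, f '' ball b (2⁻¹ ^ (n + 1)) := fun a n =>
    ho.exists_subset_image_subset_biUnion_image_ball hD _ (by positivity)
  choose W hWsub hWcard hWcover using hW
  obtain ⟨E, hW₀E, hEcard, hWE⟩ :=
    exists_superset_mk_le_of_closed hκ (hκ' ▸ hW₀) W (fun a n => hκ' ▸ hWcard a n)
  refine ⟨E, hEcard, eq_univ_of_forall fun y => ?_⟩
  obtain ⟨u, hu⟩ := exists_seq_of_forall_exists_succ
    (P := fun n a => a ∈ E ∧ y ∈ f '' ball a (2⁻¹ ^ n))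
    (R := fun n a b => dist a b < 2⁻¹ ^ n)
    (by
      obtain ⟨b, hb, hyb⟩ := mem_iUnion₂.1 (hcover₀ (by simp [image_univ_of_surjective hs]))
      exact ⟨b, hW₀E hb, by simpa using hyb⟩)
    (by
      rintro n a ⟨haE, hya⟩
      obtain ⟨b, hb, hyb⟩ := mem_iUnion₂.1 (hWcover a n hya)
      exact ⟨b, ⟨hWE a haE n hb, hyb⟩, mem_ball'.1 (hWsub a n hb)⟩)
  have hcauchy : CauchySeq u :=
    cauchySeq_of_le_geometric 2⁻¹ 1 (by norm_num) fun n => by simpa using (hu n).2.le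
  obtain ⟨x, hx, rfl⟩ := exists_tendsto_apply_eq_of_mem_image_ball hf hcauchy
    (tendsto_pow_atTop_nhds_zero_of_lt_one (by norm_num) (by norm_num)) fun n => (hu n).1.2
  exact mem_image_of_mem f (mem_closure_of_tendsto hx (Eventually.of_forall fun n => (hu n).1.1))

theorem stmt10 {X Y : Type u} [MetricSpace X] [MetricSpace Y] [CompleteSpace X]
    (f : X → Y) (hf : Continuous f) (ho : IsOpenMap f) (hs : Function.Surjective f)
    (S : Set Y) :
    ∃ Z : Set X, densityCharacter Z ≤ densityCharacter Y ∧ S ⊆ f '' Z := by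
  obtain ⟨D, hD, hDcard⟩ := exists_dense_mk_eq_densityCharacter Y
  rcases le_or_gt ℵ₀ #D with hκ | hfin
  · obtain ⟨E, hE, himage⟩ := ho.exists_mk_le_image_closure_eq_univ hf hs hD hκ
    exact ⟨closure E, (densityCharacter_closure_le E).trans (hE.trans hDcard.le),
      himage ▸ subset_univ S⟩
  · have hDuniv : D = univ := by
      simpa [(lt_aleph0_iff_set_finite.1 hfin).isClosed.closure_eq] using hD.closure_eq
    refine ⟨range (surjInv hs), ?_, fun y _ => ⟨_, mem_range_self y, surjInv_eq hs y⟩⟩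
    calc densityCharacter (range (surjInv hs))
        ≤ #(range (surjInv hs)) := densityCharacter_le_mk_self
      _ ≤ #Y := mk_range_le
      _ = densityCharacter Y := by rw [← hDcard, hDuniv, mk_univ]
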